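/- arXiv:2501.03642 — 2 statements merged into one kernel-verified Lean document; each statement's English description precedes it below -/
import Mathlib

section
/- The token sliding reconfiguration graph of minimum skew forcing sets of a tree $T$ contains no edges: no two minimum skew forcing sets of $T$ differ by exchanging a vertex for an adjacent vertex. -/
/-!
Let `C = S₁ ∩ S₂`. It has one vertex fewer than a minimum skew forcing set, so it is not
skew forcing, and the vertices it leaves white form a skew fort `F`. Every skew forcing set
meets every skew fort, and `S₁` can only meet `F` in `v₁`; likewise `S₂` only in `v₂`.
So `F` contains the edge `v₁v₂`. But in a finite forest no skew fort contains an edge: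
restricted to `F` no vertex has degree one, and a longest path in a nonempty finite forest
ends at a leaf.
-/

open SimpleGraph

variable {V : Type*}

/-- A skew fort: a nonempty vertex set `F` such that no vertex of the graph
has exactly one neighbor in `F`. -/
def SkewFort (G : SimpleGraph V) (F : Set V) : Prop :=
  F.Nonempty ∧ ∀ v : V, (G.neighborSet v ∩ F).ncard ≠ 1

/-- The vertices eventually forced blue by the skew color change rule starting
from the set `S` of initially blue vertices: a vertex `v` is forced if some
vertex `u` has `v` as its unique non-blue neighbor. -/
inductive SkewForced (G : SimpleGraph V) (S : Set V) : V → Prop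
  | mem : ∀ {v}, v ∈ S → SkewForced G S v
  | force : ∀ {u v}, G.Adj u v → (∀ w, G.Adj u w → w ≠ v → SkewForced G S w) →
      SkewForced G S v

/-- The skew closure of `S`: the final set of blue vertices. -/
def skewClosure (G : SimpleGraph V) (S : Set V) : Set V := {v | SkewForced G S v}

/-- `S` is a skew forcing set if its skew closure is everything. -/
def IsSkewForcingSet (G : SimpleGraph V) (S : Set V) : Prop :=
  skewClosure G S = Set.univ

/-- The skew forcing number: minimum cardinality of a skew forcing set. -/
noncomputable def skewForcingNumber (G : SimpleGraph V) : ℕ :=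
  sInf {n | ∃ S : Set V, S.ncard = n ∧ IsSkewForcingSet G S}

namespace SimpleGraph

theorem IsAcyclic.eq_bot_of_forall_ncard_neighborSet_ne_one [Finite V] {G : SimpleGraph V}
    (hG : G.IsAcyclic) (hdeg : ∀ v, (G.neighborSet v).ncard ≠ 1) : G = ⊥ := by
  by_contra hne
  obtain ⟨a, b, hab⟩ := G.ne_bot_iff_exists_adj.mp hne
  have : Nonempty V := ⟨a⟩
  obtain ⟨u, v, p, hp, hlongest⟩ := Walk.exists_isPath_forall_isPath_length_le_length G
  have hnil : ¬ p.Nil := by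
    intro h
    have := hlongest a b _ (Path.singleton hab).2
    simp [h.length_eq_zero, Path.singleton] at this
  have hx : G.Adj v p.penultimate := (p.adj_penultimate hnil).symm
  obtain ⟨w, hvw, hwx⟩ : ∃ w, G.Adj v w ∧ w ≠ p.penultimate := by
    by_contra! h
    exact hdeg v (Set.ncard_eq_one.mpr ⟨_, Set.eq_singleton_iff_unique_mem.mpr ⟨hx, h⟩⟩)
  have hw : w ∉ p.support := fun hw => hwx (hG.eq_penultimate_of_adj_end hp hvw hw)
  have := hlongest u w _ (hp.concat hw hvw)
  simp at this

end SimpleGraph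

theorem SkewForced.notMem_of_disjoint {G : SimpleGraph V} {S F : Set V}
    (hF : ∀ u, (G.neighborSet u ∩ F).ncard ≠ 1) (hSF : Disjoint S F) {v : V}
    (hv : SkewForced G S v) : v ∉ F := by
  induction hv with
  | mem hvS => exact hSF.notMem_of_mem_left hvS
  | @force u v huv _ ih =>
    intro hvF
    refine hF u (Set.ncard_eq_one.mpr ⟨v, ?_⟩)
    refine Set.eq_singleton_iff_unique_mem.mpr ⟨⟨huv, hvF⟩, fun w hw => ?_⟩
    by_contra hwv
    exact ih w hw.1 hwv hw.2

theorem IsSkewForcingSet.inter_nonempty {G : SimpleGraph V} {S F : Set V}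
    (hS : IsSkewForcingSet G S) (hF : SkewFort G F) : (S ∩ F).Nonempty := by
  rw [← Set.not_disjoint_iff_nonempty_inter]
  intro hSF
  obtain ⟨x, hx⟩ := hF.1
  have hforced : x ∈ skewClosure G S := hS ▸ Set.mem_univ x
  exact hforced.notMem_of_disjoint hF.2 hSF hx

theorem skewFort_compl_skewClosure {G : SimpleGraph V} {S : Set V}
    (hS : ¬ IsSkewForcingSet G S) : SkewFort G (skewClosure G S)ᶜ := by
  refine ⟨Set.nonempty_compl.mpr hS, fun u hu => ?_⟩
  obtain ⟨v, hv⟩ := Set.ncard_eq_one.mp hu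
  have hvmem : v ∈ G.neighborSet u ∩ (skewClosure G S)ᶜ := hv ▸ rfl
  refine hvmem.2 (SkewForced.force hvmem.1 fun w huw hwv => ?_)
  by_contra hw
  have hwmem : w ∈ G.neighborSet u ∩ (skewClosure G S)ᶜ := ⟨huw, hw⟩
  rw [hv] at hwmem
  exact hwv hwmem

theorem skewForcingNumber_le_ncard {G : SimpleGraph V} {S : Set V}
    (hS : IsSkewForcingSet G S) : skewForcingNumber G ≤ S.ncard :=
  Nat.sInf_le ⟨S, rfl, hS⟩

theorem IsSkewForcingSet.notMem_skewClosure {G : SimpleGraph V} {S C : Set V} {v : V}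
    (hS : IsSkewForcingSet G S) (hC : ¬ IsSkewForcingSet G C) (hSC : S ⊆ insert v C) :
    v ∉ skewClosure G C := by
  obtain ⟨x, hxS, hxF⟩ := hS.inter_nonempty (skewFort_compl_skewClosure hC)
  rcases hSC hxS with rfl | hxC
  · exact hxF
  · exact absurd (SkewForced.mem hxC) hxF

theorem SkewFort.not_adj_of_isAcyclic [Finite V] {G : SimpleGraph V} (hG : G.IsAcyclic)
    {F : Set V} (hF : SkewFort G F) {u v : V} (hu : u ∈ F) (hv : v ∈ F) : ¬ G.Adj u v := by
  intro huv
  have hdeg : ∀ x, ((G.induce F).neighborSet x).ncard ≠ 1 := by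
    intro x
    have hnbr : (G.induce F).neighborSet x = Subtype.val ⁻¹' G.neighborSet x := rfl
    rw [hnbr, ← Set.ncard_image_of_injective _ Subtype.val_injective,
      Subtype.image_preimage_coe, Set.inter_comm]
    exact hF.2 x
  have hbot := (hG.induce F).eq_bot_of_forall_ncard_neighborSet_ne_one hdeg
  have hadj : (G.induce F).Adj ⟨u, hu⟩ ⟨v, hv⟩ := huv
  simp [hbot] at hadj

theorem tree_skew_token_sliding_no_edges_general [Fintype V] (T : SimpleGraph V) (hT : T.IsTree)
    (S₁ S₂ : Set V)
    (h₁ : IsSkewForcingSet T S₁) (h₁c : S₁.ncard = skewForcingNumber T)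
    (h₂ : IsSkewForcingSet T S₂) :
    ¬ ∃ v₁ v₂ : V, S₁ \ S₂ = {v₁} ∧ S₂ \ S₁ = {v₂} ∧ T.Adj v₁ v₂ := by
  rintro ⟨v₁, v₂, h₁₂, h₂₁, hadj⟩
  have hv₁ : v₁ ∈ S₁ \ S₂ := h₁₂ ▸ rfl
  have hC : ¬ IsSkewForcingSet T (S₁ ∩ S₂) := by
    intro hC
    have hlt : (S₁ ∩ S₂).ncard < S₁.ncard :=
      Set.ncard_lt_ncard (Set.inter_ssubset_left_iff.mpr fun h => hv₁.2 (h hv₁.1))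
    have := skewForcingNumber_le_ncard hC
    omega
  have hS₁ : S₁ ⊆ insert v₁ (S₁ ∩ S₂) := by
    rw [← Set.singleton_union, ← h₁₂, Set.sdiff_union_inter]
  have hS₂ : S₂ ⊆ insert v₂ (S₁ ∩ S₂) := by
    rw [← Set.singleton_union, ← h₂₁, Set.inter_comm, Set.sdiff_union_inter]
  exact (skewFort_compl_skewClosure hC).not_adj_of_isAcyclic hT.isAcyclic
    (h₁.notMem_skewClosure hC hS₁) (h₂.notMem_skewClosure hC hS₂) hadj

/-- No two minimum skew forcing sets of a tree differ by a slide: the skew token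
sliding graph of a tree has no edges. -/
theorem tree_skew_token_sliding_no_edges [Fintype V] (T : SimpleGraph V) (hT : T.IsTree)
    (S₁ S₂ : Set V)
    (h₁ : IsSkewForcingSet T S₁) (h₁c : S₁.ncard = skewForcingNumber T)
    (h₂ : IsSkewForcingSet T S₂) (h₂c : S₂.ncard = skewForcingNumber T) :
    ¬ ∃ v₁ v₂ : V, S₁ \ S₂ = {v₁} ∧ S₂ \ S₁ = {v₂} ∧ T.Adj v₁ v₂ :=
  tree_skew_token_sliding_no_edges_general T hT S₁ S₂ h₁ h₁c h₂
end

section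
/- For a tree $T$, any two minimum skew forcing sets $S_1, S_2$ of $T$ are connected by a sequence of minimum skew forcing sets each differing from the next by exchanging a single vertex (i.e., the token exchange reconfiguration graph of minimum skew forcing sets of a tree is connected). -/
/-! In any graph, a first force `u → w` from a skew forcing set `S` lets one extend or re-route
a matching so that it also covers `w`; hence `Sᶜ` lies inside the vertex set of a matching.
In a forest, conversely, the complement of a matched vertex set is skew forcing: peel off a leaf
edge `wb` of the induced forest, `w` forces `b` at once and `b` forces `w` at the end.
So minimum skew forcing sets of a tree are the complements of vertex sets of maximum matchings.
These satisfy the basis exchange axiom (alternating paths), and any set system with that axiom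
has a connected token exchange graph. -/

open SimpleGraph

variable {V : Type*}

theorem reflTransGen_of_exchange {α : Type*} [Finite α] {P : Set α → Prop}
    (hex : ∀ S₁ S₂, P S₁ → P S₂ → ∀ y ∈ S₁ \ S₂, ∃ x ∈ S₂ \ S₁, P (insert x (S₁ \ {y})))
    {S₁ S₂ : Set α} (h₁ : P S₁) (h₂ : P S₂) :
    Relation.ReflTransGen
      (fun S S' => P S ∧ P S' ∧ (S \ S').ncard = 1 ∧ (S' \ S).ncard = 1) S₁ S₂ := by
  induction hn : (S₁ \ S₂).ncard using Nat.strong_induction_on generalizing S₁ with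
  | _ n ih =>
  obtain hempty | ⟨y, hy⟩ := (S₁ \ S₂).eq_empty_or_nonempty
  · obtain rfl : S₁ = S₂ := (Set.sdiff_eq_empty.1 hempty).antisymm fun y hy₂ =>
      by_contra fun hy₁ =>
        have ⟨_, hx, _⟩ := hex S₂ S₁ h₂ h₁ y ⟨hy₂, hy₁⟩
        hempty.subset hx
    exact .refl
  obtain ⟨x, hx, hP⟩ := hex S₁ S₂ h₁ h₂ y hy
  have hxy : x ≠ y := fun h => hx.2 (h ▸ hy.1)
  have hout : S₁ \ insert x (S₁ \ {y}) = {y} := by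
    ext a; simp only [Set.mem_sdiff, Set.mem_insert_iff, Set.mem_singleton_iff]; grind
  have hin : insert x (S₁ \ {y}) \ S₁ = {x} := by
    ext a; simp only [Set.mem_sdiff, Set.mem_insert_iff, Set.mem_singleton_iff]; grind
  have hlt : (insert x (S₁ \ {y}) \ S₂).ncard < n := by
    have : insert x (S₁ \ {y}) \ S₂ = (S₁ \ S₂) \ {y} := by
      ext a; simp only [Set.mem_sdiff, Set.mem_insert_iff, Set.mem_singleton_iff]; grind
    rw [this, ← hn]
    exact Set.ncard_sdiff_singleton_lt_of_mem hy
  refine .head ⟨h₁, hP, ?_, ?_⟩ (ih _ hlt hP rfl)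
  · rw [hout, Set.ncard_singleton]
  · rw [hin, Set.ncard_singleton]

namespace SimpleGraph.Subgraph

variable {G : SimpleGraph V} {M : G.Subgraph} {u v w z : V}

lemma IsMatching.sup_subgraphOfAdj (hM : M.IsMatching) (huv : G.Adj u v) (hu : u ∉ M.verts)
    (hv : v ∉ M.verts) : (M ⊔ G.subgraphOfAdj huv).IsMatching :=
  hM.sup (.subgraphOfAdj huv) <| by
    rw [hM.support_eq_verts, (IsMatching.subgraphOfAdj huv).support_eq_verts,
      subgraphOfAdj_verts]
    simp [hu, hv]

lemma IsMatching.deleteVerts_pair (hM : M.IsMatching) (huz : M.Adj u z) :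
    (M.deleteVerts {u, z}).IsMatching := by
  rintro a ⟨ha, hauz⟩
  obtain ⟨b, hab, huniq⟩ := hM ha
  refine ⟨b, ?_, fun c hc => huniq c (deleteVerts_adj.1 hc).2.2.2.2⟩
  have hbu : b ≠ u := fun h => hauz (.inr (hM.eq_of_adj_right (h ▸ hab) huz.symm))
  have hbz : b ≠ z := fun h => hauz (.inl (hM.eq_of_adj_right (h ▸ hab) huz))
  exact deleteVerts_adj.2 ⟨ha, hauz, M.edge_vert hab.symm, by simp [hbu, hbz], hab⟩

lemma IsMatching.exists_rematch (hM : M.IsMatching) (huz : M.Adj u z) (huw : G.Adj u w)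
    (hw : w ∉ M.verts) :
    ∃ M' : G.Subgraph, M'.IsMatching ∧ M'.verts = insert w (M.verts \ {z}) ∧
      M'.edgeSet ⊆ insert s(u, w) (M.edgeSet \ {s(u, z)}) := by
  refine ⟨M.deleteVerts {u, z} ⊔ G.subgraphOfAdj huw,
    (hM.deleteVerts_pair huz).sup_subgraphOfAdj huw (by simp) (by simp [hw]), ?_, ?_⟩
  · have hu := M.edge_vert huz
    have huz' := huz.ne
    ext a
    simp only [verts_sup, deleteVerts_verts, subgraphOfAdj_verts]
    grind
  · rw [edgeSet_sup, edgeSet_subgraphOfAdj]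
    rintro e (he | rfl)
    · induction e using Sym2.ind with
      | _ a b =>
      obtain ⟨-, ha, -, hb, hab⟩ := deleteVerts_adj.1 he
      exact .inr ⟨hab, fun h => ha (Sym2.mem_iff.1 (h ▸ Sym2.mem_mk_left a b))⟩
    · exact Set.mem_insert _ _

def IsMaximumMatching (M : G.Subgraph) : Prop :=
  M.IsMatching ∧ ∀ M' : G.Subgraph, M'.IsMatching → M'.verts.ncard ≤ M.verts.ncard

variable [Finite V]

lemma IsMaximumMatching.mem_verts_of_adj (hM : M.IsMaximumMatching) (huv : G.Adj u v)
    (hu : u ∉ M.verts) : v ∈ M.verts := by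
  by_contra hv
  have hcard := hM.2 _ (hM.1.sup_subgraphOfAdj huv hu hv)
  rw [verts_sup, subgraphOfAdj_verts, Set.ncard_union_eq (by simp [hu, hv]),
    Set.ncard_pair huv.ne] at hcard
  omega

/-- Follow the alternating path from `y`: `y`'s `M₂`-partner `y'` is covered by `M₁` by
maximality; rematch `y'` to `y`, which frees its `M₁`-partner `y''` and removes one edge of `M₁`
outside `M₂`, then continue from `y''`. -/
lemma IsMaximumMatching.exists_exchange {M₁ M₂ : G.Subgraph} (h₁ : M₁.IsMaximumMatching)
    (h₂ : M₂.IsMatching) {y : V} (hy₂ : y ∈ M₂.verts) (hy₁ : y ∉ M₁.verts) :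
    ∃ x ∈ M₁.verts, x ∉ M₂.verts ∧
      ∃ M : G.Subgraph, M.IsMatching ∧ M.verts = insert y (M₁.verts \ {x}) := by
  induction hn : (M₁.edgeSet \ M₂.edgeSet).ncard using Nat.strong_induction_on
    generalizing M₁ y with
  | _ n ih =>
  obtain ⟨y', hyy', -⟩ := h₂ hy₂
  have hy'₁ := h₁.mem_verts_of_adj (M₂.adj_sub hyy') hy₁
  obtain ⟨y'', hy'y'', -⟩ := h₁.1 hy'₁
  have hy''₁ := M₁.edge_vert hy'y''.symm
  have hy''y : y'' ≠ y := fun h => hy₁ (h ▸ hy''₁)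
  obtain ⟨M, hM, hMverts, hMedges⟩ :=
    h₁.1.exists_rematch hy'y'' (M₂.adj_sub hyy').symm hy₁
  by_cases hy''₂ : y'' ∈ M₂.verts
  swap
  · exact ⟨y'', hy''₁, hy''₂, M, hM, hMverts⟩
  have hmax : M.IsMaximumMatching := ⟨hM, fun M' hM' => by
    rw [hMverts, Set.ncard_exchange hy₁ hy''₁]
    exact h₁.2 M' hM'⟩
  have hy''M : y'' ∉ M.verts := by simp [hMverts, hy''y]
  have hlt : (M.edgeSet \ M₂.edgeSet).ncard < n := by
    have hnew : s(y', y) ∈ M₂.edgeSet := hyy'.symm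
    have hold : s(y', y'') ∈ M₁.edgeSet \ M₂.edgeSet :=
      ⟨hy'y'', fun h => hy''y (h₂.eq_of_adj_left h hyy'.symm)⟩
    rw [← hn]
    refine lt_of_le_of_lt (Set.ncard_le_ncard ?_) (Set.ncard_sdiff_singleton_lt_of_mem hold)
    intro e ⟨heM, he₂⟩
    rcases hMedges heM with rfl | ⟨he₁, hne⟩
    · exact absurd hnew he₂
    · exact ⟨⟨he₁, he₂⟩, hne⟩
  obtain ⟨x, hxM, hx₂, M', hM', hM'verts⟩ := ih _ hlt hmax hy''₂ hy''M rfl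
  have hxy : x ≠ y := fun h => hx₂ (h ▸ hy₂)
  have hxy'' : x ≠ y'' := fun h => hy''M (h ▸ hxM)
  refine ⟨x, ?_, hx₂, M', hM', ?_⟩
  · rw [hMverts] at hxM
    exact (hxM.resolve_left hxy).1
  · rw [hM'verts, hMverts]
    ext a
    simp only [Set.mem_insert_iff, Set.mem_sdiff, Set.mem_singleton_iff]
    grind

end SimpleGraph.Subgraph

namespace SimpleGraph.IsAcyclic

variable {G : SimpleGraph V}

/-- The first vertex of a longest path is a leaf. -/
lemma exists_subsingleton_neighborSet [Finite V] [Nonempty V] (hG : G.IsAcyclic) :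
    ∃ v, (G.neighborSet v).Subsingleton := by
  obtain ⟨u, v, p, hp, hlongest⟩ := Walk.exists_isPath_forall_isPath_length_le_length G
  refine ⟨u, fun a ha b hb => ?_⟩
  have hsnd : ∀ w, G.Adj u w → w = p.snd := fun w huw => by
    refine hG.eq_snd_of_adj_start hp huw (by_contra fun hw => ?_)
    have := hlongest _ _ _ (hp.cons (h := huw.symm) hw)
    simp at this
  exact (hsnd a ha).trans (hsnd b hb).symm

lemma exists_mem_subsingleton_neighborSet_inter [Finite V] (hG : G.IsAcyclic) {s : Set V}
    (hs : s.Nonempty) : ∃ v ∈ s, (G.neighborSet v ∩ s).Subsingleton := by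
  have : Nonempty s := hs.to_subtype
  obtain ⟨⟨v, hv⟩, hleaf⟩ := (hG.induce s).exists_subsingleton_neighborSet
  refine ⟨v, hv, fun a ⟨ha, has⟩ b ⟨hb, hbs⟩ => ?_⟩
  exact congrArg Subtype.val (@hleaf ⟨a, has⟩ ha ⟨b, hbs⟩ hb)

end SimpleGraph.IsAcyclic

section SkewForcing

variable {G : SimpleGraph V} {S S' : Set V} {v : V}

lemma isSkewForcingSet_iff : IsSkewForcingSet G S ↔ ∀ v, SkewForced G S v :=
  Set.eq_univ_iff_forall

lemma SkewForced.mono (hS : S ⊆ S') (h : SkewForced G S v) : SkewForced G S' v := by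
  induction h with
  | mem hv => exact .mem (hS hv)
  | force huv _ ih => exact .force huv ih

lemma IsSkewForcingSet.mono (h : IsSkewForcingSet G S) (hS : S ⊆ S') : IsSkewForcingSet G S' :=
  isSkewForcingSet_iff.2 fun v => (isSkewForcingSet_iff.1 h v).mono hS

lemma SkewForced.exists_force_of_notMem (h : SkewForced G S v) (hv : v ∉ S) :
    ∃ u w, w ∉ S ∧ G.Adj u w ∧ ∀ x, G.Adj u x → x ≠ w → x ∈ S := by
  induction h with
  | mem h => exact absurd h hv
  | @force u w huw _ ih =>
    by_cases hall : ∀ x, G.Adj u x → x ≠ w → x ∈ S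
    · exact ⟨u, w, hv, huw, hall⟩
    · push Not at hall
      obtain ⟨x, hux, hxw, hx⟩ := hall
      exact ih x hux hxw hx

/-- Performing the first force `u → w` and inducting: if `u` is matched to `z`, then `z ∈ S`,
so rematching `u` to `w` loses no vertex outside `S`. -/
lemma IsSkewForcingSet.exists_isMatching_compl_subset [Finite V] (h : IsSkewForcingSet G S) :
    ∃ M : G.Subgraph, M.IsMatching ∧ Sᶜ ⊆ M.verts := by
  induction hn : Sᶜ.ncard using Nat.strong_induction_on generalizing S with
  | _ n ih =>
  obtain hS | ⟨v, hv⟩ := Sᶜ.eq_empty_or_nonempty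
  · exact ⟨⊥, fun _ hv => hv.elim, by simp [hS]⟩
  obtain ⟨u, w, hw, huw, hforce⟩ := (isSkewForcingSet_iff.1 h v).exists_force_of_notMem hv
  have hlt : (insert w S)ᶜ.ncard < n := by
    rw [← hn]
    exact Set.ncard_lt_ncard (compl_lt_compl_iff_lt.2 (Set.ssubset_insert hw))
  obtain ⟨M, hM, hsub⟩ := ih _ hlt (h.mono (Set.subset_insert w S)) rfl
  have hcompl : Sᶜ ⊆ insert w M.verts := fun x hx =>
    (eq_or_ne x w).imp id fun hxw => hsub fun h => (Set.mem_insert_iff.1 h).elim hxw hx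
  by_cases hwM : w ∈ M.verts
  · exact ⟨M, hM, by rwa [Set.insert_eq_of_mem hwM] at hcompl⟩
  by_cases huM : u ∈ M.verts
  · obtain ⟨z, huz, -⟩ := hM huM
    have hzS : z ∈ S := hforce z (M.adj_sub huz) fun hzw => hwM (hzw ▸ M.edge_vert huz.symm)
    obtain ⟨M', hM', hM'verts, -⟩ := hM.exists_rematch huz huw hwM
    refine ⟨M', hM', fun x hx => ?_⟩
    rw [hM'verts]
    exact (hcompl hx).imp_right fun hxM => ⟨hxM, fun hxz => hx (hxz ▸ hzS)⟩
  · refine ⟨_, hM.sup_subgraphOfAdj huw huM hwM, fun x hx => ?_⟩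
    rw [Subgraph.verts_sup, subgraphOfAdj_verts]
    rcases hcompl hx with rfl | hxM
    · simp
    · exact .inl hxM

/-- Peeling off a leaf `w` of the forest induced on the matched vertices together with its
partner `b`: `w` forces `b` first, and `b` forces `w` once everything else is forced. -/
lemma SimpleGraph.Subgraph.IsMatching.verts_subset_skewClosure [Finite V] (hG : G.IsAcyclic)
    {M : G.Subgraph} (hM : M.IsMatching)
    (hout : ∀ v ∉ M.verts, ∀ w ∈ M.verts, G.Adj v w → v ∈ skewClosure G S) :
    M.verts ⊆ skewClosure G S := by
  induction hn : M.verts.ncard using Nat.strong_induction_on generalizing M with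
  | _ n ih =>
  obtain hempty | hne := M.verts.eq_empty_or_nonempty
  · simp [hempty]
  obtain ⟨w, hw, hleaf⟩ := hG.exists_mem_subsingleton_neighborSet_inter hne
  obtain ⟨b, hwb, -⟩ := hM hw
  have hb := M.edge_vert hwb.symm
  have honly : ∀ x ∈ M.verts, G.Adj w x → x = b := fun x hx hwx =>
    hleaf ⟨hwx, hx⟩ ⟨M.adj_sub hwb, hb⟩
  have hbS : b ∈ skewClosure G S := SkewForced.force (M.adj_sub hwb) fun x hwx hxb =>
    hout x (fun hx => hxb (honly x hx hwx)) w hw hwx.symm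
  have hlt : (M.deleteVerts {w, b}).verts.ncard < n := by
    rw [← hn, Subgraph.deleteVerts_verts]
    exact Set.ncard_lt_ncard (Set.sdiff_ssubset_left_iff.2 ⟨w, hw, by simp⟩)
  have hout' : ∀ v ∉ M.verts \ {w, b}, ∀ x ∈ M.verts \ {w, b}, G.Adj v x →
      v ∈ skewClosure G S := fun v hv x hx hvx => by
    by_cases hvM : v ∈ M.verts
    · by_cases hvw : v = w
      · exact absurd (honly x hx.1 (hvw ▸ hvx)) fun hxb => hx.2 (.inr hxb)
      · obtain rfl : v = b := by simpa [hvM, hvw] using hv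
        exact hbS
    · exact hout v hvM x hx.1 hvx
  have hrest : M.verts \ {w, b} ⊆ skewClosure G S := ih _ hlt (hM.deleteVerts_pair hwb) hout' rfl
  have hwS : w ∈ skewClosure G S := SkewForced.force (M.adj_sub hwb).symm fun x hbx hxw => by
    by_cases hx : x ∈ M.verts
    · exact hrest ⟨hx, by simp [hxw, hbx.ne']⟩
    · exact hout x hx b hb hbx.symm
  intro x hx
  by_cases hxw : x = w
  · exact hxw ▸ hwS
  by_cases hxb : x = b
  · exact hxb ▸ hbS
  · exact hrest ⟨hx, by simp [hxw, hxb]⟩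

lemma SimpleGraph.Subgraph.IsMatching.isSkewForcingSet_compl [Finite V] (hG : G.IsAcyclic)
    {M : G.Subgraph} (hM : M.IsMatching) : IsSkewForcingSet G M.vertsᶜ :=
  isSkewForcingSet_iff.2 fun v => by
    by_cases hv : v ∈ M.verts
    · exact hM.verts_subset_skewClosure hG (fun u hu _ _ _ => .mem hu) hv
    · exact .mem hv

end SkewForcing

section MinSkewForcing

variable {G : SimpleGraph V} {S S₁ S₂ : Set V}

def IsMinSkewForcingSet (G : SimpleGraph V) (S : Set V) : Prop :=
  IsSkewForcingSet G S ∧ S.ncard = skewForcingNumber G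

variable [Finite V]

lemma IsMinSkewForcingSet.exists_isMaximumMatching (hG : G.IsAcyclic)
    (hS : IsMinSkewForcingSet G S) :
    ∃ M : G.Subgraph, M.IsMaximumMatching ∧ M.verts = Sᶜ := by
  have hle : ∀ M : G.Subgraph, M.IsMatching → M.verts.ncard ≤ Sᶜ.ncard := fun M hM => by
    have hmin : skewForcingNumber G ≤ M.vertsᶜ.ncard :=
      Nat.sInf_le ⟨_, rfl, hM.isSkewForcingSet_compl hG⟩
    have := hS.2
    have := Set.ncard_add_ncard_compl S
    have := Set.ncard_add_ncard_compl M.verts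
    omega
  obtain ⟨M, hM, hsub⟩ := hS.1.exists_isMatching_compl_subset
  have hverts : M.verts = Sᶜ := (Set.eq_of_subset_of_ncard_le hsub (hle M hM)).symm
  exact ⟨M, ⟨hM, fun M' hM' => hverts ▸ hle M' hM'⟩, hverts⟩

lemma IsMinSkewForcingSet.exists_exchange (hG : G.IsAcyclic) (h₁ : IsMinSkewForcingSet G S₁)
    (h₂ : IsMinSkewForcingSet G S₂) {y : V} (hy : y ∈ S₁ \ S₂) :
    ∃ x ∈ S₂ \ S₁, IsMinSkewForcingSet G (insert x (S₁ \ {y})) := by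
  obtain ⟨M₁, hM₁, hM₁verts⟩ := h₁.exists_isMaximumMatching hG
  obtain ⟨M₂, hM₂, hM₂verts⟩ := h₂.exists_isMaximumMatching hG
  obtain ⟨x, hx₁, hx₂, M, hM, hMverts⟩ :=
    hM₁.exists_exchange (y := y) hM₂.1 (by rw [hM₂verts]; exact hy.2)
      (by rw [hM₁verts, Set.notMem_compl_iff]; exact hy.1)
  rw [hM₁verts] at hx₁ hMverts
  rw [hM₂verts, Set.notMem_compl_iff] at hx₂
  have hxy : x ≠ y := fun h => hx₁ (h ▸ hy.1)
  have hcompl : M.vertsᶜ = insert x (S₁ \ {y}) := by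
    rw [hMverts]
    ext a
    simp only [Set.mem_compl_iff, Set.mem_insert_iff, Set.mem_sdiff, Set.mem_singleton_iff]
    grind [hy.1]
  refine ⟨x, ⟨hx₂, hx₁⟩, hcompl ▸ hM.isSkewForcingSet_compl hG, ?_⟩
  rw [Set.ncard_exchange hx₁ hy.1, h₁.2]

end MinSkewForcing

/-- The skew token exchange graph of a tree is connected: any two minimum skew
forcing sets are joined by a sequence of single-vertex exchanges through minimum
skew forcing sets. -/
theorem tree_skew_token_exchange_connected [Fintype V] (T : SimpleGraph V) (hT : T.IsTree)
    (S₁ S₂ : Set V)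
    (h₁ : IsSkewForcingSet T S₁) (h₁c : S₁.ncard = skewForcingNumber T)
    (h₂ : IsSkewForcingSet T S₂) (h₂c : S₂.ncard = skewForcingNumber T) :
    Relation.ReflTransGen
      (fun S S' : Set V =>
        IsSkewForcingSet T S ∧ S.ncard = skewForcingNumber T ∧
        IsSkewForcingSet T S' ∧ S'.ncard = skewForcingNumber T ∧
        (S \ S').ncard = 1 ∧ (S' \ S).ncard = 1)
      S₁ S₂ := by
  have hexchange := reflTransGen_of_exchange (P := IsMinSkewForcingSet T)
    (fun _ _ hS hS' _ hy => hS.exists_exchange hT.isAcyclic hS' hy) ⟨h₁, h₁c⟩ ⟨h₂, h₂c⟩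
  refine Relation.ReflTransGen.mono ?_ _ _ hexchange
  rintro S S' ⟨⟨hS, hSc⟩, ⟨hS', hS'c⟩, hout, hin⟩
  exact ⟨hS, hSc, hS', hS'c, hout, hin⟩
end
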